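/- Suppose n ≥ 2, f(d,l) = 1, and the index j is such that α := (t̄_j − v_j)/γ_j and β := (t̄_j + v_j)/γ_j (with γ_j := sqrt(a_jᵀBa_j)) satisfy αβ ≤ −2/n and max{α, −β} ≤ −2/n. Then there exists σ̂ < 0 such that g̃(d₊(σ̂), l) ≤ g̃(d, l) − 1/(4n), where d₊(σ) := d + (σ/((1−σ)γ_j²)) e_j and g̃(d,l) := n·f(d,l) − ln det(ADAᵀ) − n. -/

import Mathlib

open Matrix

/-- `f(d,l) := rᵀDAᵀBADr - rᵀDr + vᵀDv`. -/
noncomputable def fval {n m : ℕ} (A : Matrix (Fin n) (Fin m) ℝ) (u d l : Fin m → ℝ) : ℝ :=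
  let D := Matrix.diagonal d
  let r := (u + l) / 2
  let v := (u - l) / 2
  let B := (A * D * Aᵀ)⁻¹
  r ⬝ᵥ (D *ᵥ (Aᵀ *ᵥ (B *ᵥ (A *ᵥ (D *ᵥ r))))) - r ⬝ᵥ (D *ᵥ r) + v ⬝ᵥ (D *ᵥ v)

/-- `g̃(d,l) := n·f(d,l) - ln det(ADAᵀ) - n`. -/
noncomputable def gtilde {n m : ℕ} (A : Matrix (Fin n) (Fin m) ℝ) (u l : Fin m → ℝ)
    (d : Fin m → ℝ) : ℝ :=
  (n : ℝ) * fval A u d l - Real.log ((A * Matrix.diagonal d * Aᵀ).det) - n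

/-!
Raising `d_j` is a rank-one update `ADAᵀ ↦ ADAᵀ + δ a_j a_jᵀ`, so the matrix determinant lemma and
the Sherman–Morrison formula give `g̃` along the ray `d₊(σ)` in closed form:
`g̃(d₊(σ)) = g̃(d) + nσ (((β-α)/2)² / (1-σ) - ((α+β)/2)²) + log (1-σ)`.
For `σ = -t` with `t = 1/(n(β-α))` the increment equals `t·nαβ + 1/(4n(1+t)) + log (1+t)`, and the
hypotheses on `α, β` give `nαβ ≤ -(β-α+2)/2`; with `log (1+t) ≤ t` it is at most `-1/(4n)`.
-/

section RankOneUpdate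

variable {ι K : Type*} [Fintype ι] [DecidableEq ι] [Field K] {M : Matrix ι ι K}

theorem det_add_vecMulVec (hM : IsUnit M.det) (u v : ι → K) :
    (M + vecMulVec u v).det = M.det * (1 + v ⬝ᵥ (M⁻¹ *ᵥ u)) := by
  rw [vecMulVec_eq Unit, det_add_replicateCol_mul_replicateRow hM, Matrix.mul_assoc,
    ← replicateCol_mulVec, det_unique (n := Unit)]
  rfl

theorem inv_add_vecMulVec (hM : IsUnit M.det) (u v : ι → K) (h : 1 + v ⬝ᵥ (M⁻¹ *ᵥ u) ≠ 0) :
    (M + vecMulVec u v)⁻¹ =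
      M⁻¹ - (1 + v ⬝ᵥ (M⁻¹ *ᵥ u))⁻¹ • vecMulVec (M⁻¹ *ᵥ u) (v ᵥ* M⁻¹) := by
  apply inv_eq_right_inv
  set c := v ⬝ᵥ (M⁻¹ *ᵥ u)
  have hMu : M * vecMulVec (M⁻¹ *ᵥ u) (v ᵥ* M⁻¹) = vecMulVec u (v ᵥ* M⁻¹) := by
    rw [mul_vecMulVec, mulVec_mulVec, mul_nonsing_inv _ hM, one_mulVec]
  have huv : vecMulVec u v * vecMulVec (M⁻¹ *ᵥ u) (v ᵥ* M⁻¹) = c • vecMulVec u (v ᵥ* M⁻¹) := by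
    rw [vecMulVec_mul_vecMulVec, vecMulVec_smul]
  have hcoef : 1 - ((1 + c)⁻¹ + (1 + c)⁻¹ * c) = 0 := by
    field_simp; ring
  rw [Matrix.add_mul, Matrix.mul_sub, Matrix.mul_sub, mul_nonsing_inv _ hM, Matrix.mul_smul,
    Matrix.mul_smul, hMu, huv, vecMulVec_mul, smul_smul]
  calc _ = 1 + (1 - ((1 + c)⁻¹ + (1 + c)⁻¹ * c)) • vecMulVec u (v ᵥ* M⁻¹) := by module
    _ = 1 := by rw [hcoef, zero_smul, add_zero]

theorem dotProduct_inv_add_vecMulVec_mulVec (hM : IsUnit M.det) (u v x y : ι → K)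
    (h : 1 + v ⬝ᵥ (M⁻¹ *ᵥ u) ≠ 0) :
    x ⬝ᵥ ((M + vecMulVec u v)⁻¹ *ᵥ y) =
      x ⬝ᵥ (M⁻¹ *ᵥ y) - (x ⬝ᵥ (M⁻¹ *ᵥ u)) * (v ⬝ᵥ (M⁻¹ *ᵥ y)) / (1 + v ⬝ᵥ (M⁻¹ *ᵥ u)) := by
  rw [inv_add_vecMulVec hM u v h, sub_mulVec, smul_mulVec, vecMulVec_mulVec, ← dotProduct_mulVec,
    dotProduct_sub, dotProduct_smul, dotProduct_smul]
  simp only [op_smul_eq_smul, smul_eq_mul]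
  ring

end RankOneUpdate

section DiagonalUpdate

variable {ι κ R : Type*} [Fintype κ] [DecidableEq κ] [CommRing R]
  (A : Matrix ι κ R) (d : κ → R) (j : κ) (δ : R)

theorem diagonal_add_smul_single_mulVec (x : κ → R) :
    diagonal (d + δ • Pi.single j 1) *ᵥ x = diagonal d *ᵥ x + Pi.single j (δ * x j) := by
  ext i
  rcases eq_or_ne i j with rfl | hij <;> simp [mulVec_diagonal, add_mul, *]

theorem mul_diagonal_add_smul_single_mul_transpose :
    A * diagonal (d + δ • Pi.single j 1) * Aᵀ =
      A * diagonal d * Aᵀ + vecMulVec (δ • A.col j) (A.col j) := by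
  have hsingle : A * diagonal (Pi.single j (1 : R)) * Aᵀ = vecMulVec (A.col j) (A.col j) := by
    ext i k
    simp [mul_apply, diagonal_apply, Pi.single_apply, vecMulVec_apply]
  rw [show d + δ • Pi.single j 1 = fun k ↦ d k + (δ • Pi.single j (1 : R)) k from rfl,
    ← diagonal_add, diagonal_smul, Matrix.mul_add, Matrix.add_mul, Matrix.mul_smul,
    Matrix.smul_mul, hsingle, smul_vecMulVec]

theorem mulVec_diagonal_add_smul_single_mulVec (x : κ → R) :
    A *ᵥ (diagonal (d + δ • Pi.single j 1) *ᵥ x) =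
      A *ᵥ (diagonal d *ᵥ x) + (δ * x j) • A.col j := by
  rw [diagonal_add_smul_single_mulVec, mulVec_add, mulVec_single, op_smul_eq_smul]

theorem dotProduct_diagonal_add_smul_single_mulVec (x : κ → R) :
    x ⬝ᵥ (diagonal (d + δ • Pi.single j 1) *ᵥ x) = x ⬝ᵥ (diagonal d *ᵥ x) + δ * x j ^ 2 := by
  rw [diagonal_add_smul_single_mulVec, dotProduct_add, dotProduct_single]
  ring

theorem isSymm_mul_diagonal_mul_transpose : (A * diagonal d * Aᵀ).IsSymm := by
  simp [IsSymm, transpose_mul, Matrix.mul_assoc]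

end DiagonalUpdate

theorem Matrix.IsSymm.dotProduct_mulVec_comm {ι R : Type*} [Fintype ι] [CommSemiring R]
    {B : Matrix ι ι R} (hB : B.IsSymm) (x y : ι → R) : x ⬝ᵥ (B *ᵥ y) = y ⬝ᵥ (B *ᵥ x) := by
  rw [dotProduct_mulVec, ← mulVec_transpose, hB.eq, dotProduct_comm]

section Perturbation

variable {n m : ℕ} {A : Matrix (Fin n) (Fin m) ℝ} {u l d r v : Fin m → ℝ}

theorem fval_eq_dotProduct (hr : r = (u + l) / 2) (hv : v = (u - l) / 2) :
    fval A u d l = (A *ᵥ (diagonal d *ᵥ r)) ⬝ᵥ ((A * diagonal d * Aᵀ)⁻¹ *ᵥ (A *ᵥ (diagonal d *ᵥ r)))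
      - r ⬝ᵥ (diagonal d *ᵥ r) + v ⬝ᵥ (diagonal d *ᵥ v) := by
  subst hr hv
  rw [fval, dotProduct_mulVec _ (diagonal d), dotProduct_mulVec, vecMul_transpose,
    ← mulVec_transpose, diagonal_transpose]

theorem fval_add_smul_single (hr : r = (u + l) / 2) (hv : v = (u - l) / 2)
    (hM : IsUnit (A * diagonal d * Aᵀ).det) {B : Matrix (Fin n) (Fin n) ℝ}
    (hB : B = (A * diagonal d * Aᵀ)⁻¹) {tbar : Fin m → ℝ}
    (htbar : tbar = Aᵀ *ᵥ (B *ᵥ (A *ᵥ (diagonal d *ᵥ r))) - r) (j : Fin m) (δ : ℝ)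
    (hτ : 1 + δ * (A.col j ⬝ᵥ (B *ᵥ A.col j)) ≠ 0) :
    fval A u (d + δ • Pi.single j 1) l =
      fval A u d l + δ * v j ^ 2 - δ * tbar j ^ 2 / (1 + δ * (A.col j ⬝ᵥ (B *ᵥ A.col j))) := by
  subst hB
  have hBsymm := (isSymm_mul_diagonal_mul_transpose A d).inv
  have htbar_j :
      tbar j = A.col j ⬝ᵥ ((A * diagonal d * Aᵀ)⁻¹ *ᵥ (A *ᵥ (diagonal d *ᵥ r))) - r j := by
    rw [htbar]; rfl
  have hτ' : 1 + A.col j ⬝ᵥ ((A * diagonal d * Aᵀ)⁻¹ *ᵥ (δ • A.col j)) ≠ 0 := by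
    rwa [mulVec_smul, dotProduct_smul, smul_eq_mul]
  rw [fval_eq_dotProduct hr hv, fval_eq_dotProduct hr hv,
    mul_diagonal_add_smul_single_mul_transpose,
    mulVec_diagonal_add_smul_single_mulVec, dotProduct_diagonal_add_smul_single_mulVec,
    dotProduct_diagonal_add_smul_single_mulVec, dotProduct_inv_add_vecMulVec_mulVec hM _ _ _ _ hτ',
    htbar_j]
  simp only [mulVec_add, mulVec_smul, dotProduct_add, add_dotProduct, dotProduct_smul,
    smul_dotProduct, smul_eq_mul, hBsymm.dotProduct_mulVec_comm (A *ᵥ (diagonal d *ᵥ r)) (A.col j)]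
  field_simp
  ring

theorem gtilde_add_smul_single (hr : r = (u + l) / 2) (hv : v = (u - l) / 2)
    (hM : IsUnit (A * diagonal d * Aᵀ).det) {B : Matrix (Fin n) (Fin n) ℝ}
    (hB : B = (A * diagonal d * Aᵀ)⁻¹) {tbar : Fin m → ℝ}
    (htbar : tbar = Aᵀ *ᵥ (B *ᵥ (A *ᵥ (diagonal d *ᵥ r))) - r) (j : Fin m) (δ : ℝ)
    (hτ : 1 + δ * (A.col j ⬝ᵥ (B *ᵥ A.col j)) ≠ 0) :
    gtilde A u l (d + δ • Pi.single j 1) = gtilde A u l d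
      + n * (δ * v j ^ 2 - δ * tbar j ^ 2 / (1 + δ * (A.col j ⬝ᵥ (B *ᵥ A.col j))))
      - Real.log (1 + δ * (A.col j ⬝ᵥ (B *ᵥ A.col j))) := by
  have hdet : (A * diagonal (d + δ • Pi.single j 1) * Aᵀ).det =
      (A * diagonal d * Aᵀ).det * (1 + δ * (A.col j ⬝ᵥ (B *ᵥ A.col j))) := by
    rw [mul_diagonal_add_smul_single_mul_transpose, det_add_vecMulVec hM, ← hB, mulVec_smul,
      dotProduct_smul, smul_eq_mul]
  rw [gtilde, gtilde, fval_add_smul_single hr hv hM hB htbar j δ hτ, hdet,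
    Real.log_mul hM.ne_zero hτ]
  ring

theorem gtilde_dPlus_eq (hr : r = (u + l) / 2) (hv : v = (u - l) / 2)
    (hM : IsUnit (A * diagonal d * Aᵀ).det) {B : Matrix (Fin n) (Fin n) ℝ}
    (hB : B = (A * diagonal d * Aᵀ)⁻¹) {tbar : Fin m → ℝ}
    (htbar : tbar = Aᵀ *ᵥ (B *ᵥ (A *ᵥ (diagonal d *ᵥ r))) - r) (j : Fin m) {γ σ : ℝ}
    (hγ : γ ^ 2 = A.col j ⬝ᵥ (B *ᵥ A.col j)) (hγ0 : γ ≠ 0) (hσ : σ < 1) :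
    gtilde A u l (d + (σ / ((1 - σ) * γ ^ 2)) • Pi.single j 1) = gtilde A u l d
      + n * σ * ((v j / γ) ^ 2 / (1 - σ) - (tbar j / γ) ^ 2) + Real.log (1 - σ) := by
  have hσ' : 1 - σ ≠ 0 := by linarith
  have hτ : 1 + σ / ((1 - σ) * γ ^ 2) * (A.col j ⬝ᵥ (B *ᵥ A.col j)) = (1 - σ)⁻¹ := by
    rw [← hγ]; field_simp; ring
  rw [gtilde_add_smul_single hr hv hM hB htbar j _ (by rw [hτ]; exact inv_ne_zero hσ'), hτ,
    Real.log_inv]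
  field_simp
  ring

end Perturbation

theorem exists_neg_sigma_decrease_le {N α β : ℝ} (hN : 0 < N) (hαβ : α * β ≤ -2 / N)
    (hmax : max α (-β) ≤ -2 / N) :
    ∃ σ < 0, N * σ * (((β - α) / 2) ^ 2 / (1 - σ) - ((α + β) / 2) ^ 2) + Real.log (1 - σ)
      ≤ -1 / (4 * N) := by
  have hα : α ≤ -2 / N := le_of_max_le_left hmax
  have hβ : 2 / N ≤ β := by linarith [le_of_max_le_right hmax, neg_div N 2]
  have hs : 4 / N ≤ β - α := by linarith [show 4 / N = 2 / N - -2 / N by ring]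
  have hs0 : 0 < β - α := lt_of_lt_of_le (by positivity) hs
  -- averaging `N α β ≤ -2` with `N α β ≤ -(β - α)`, which comes from `(-α - 2/N)(β - 2/N) ≥ 0`
  have hNαβ : N * (α * β) ≤ -(β - α + 2) / 2 := by
    have h2 : N * (α * β) ≤ -2 := by
      have := mul_le_mul_of_nonneg_left hαβ hN.le
      rwa [mul_div_cancel₀ _ hN.ne'] at this
    have hs' : N * (α * β) ≤ -(β - α) := by
      have hprod := mul_nonneg (mul_nonneg hN.le (neg_nonneg.mpr (sub_nonpos.mpr hα)))
        (sub_nonneg.mpr hβ)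
      have hexpand : N * -(α - -2 / N) * (β - 2 / N) = -(N * (α * β)) - 2 * (β - α) + 4 / N := by
        field_simp; ring
      linarith
    linarith
  set t := 1 / (N * (β - α)) with ht
  have ht0 : 0 < t := by positivity
  refine ⟨-t, neg_lt_zero.mpr ht0, ?_⟩
  have hlog : Real.log (1 + t) ≤ t := by
    linarith [Real.log_le_sub_one_of_pos (by linarith : 0 < 1 + t)]
  have hfrac : 1 / (4 * N * (1 + t)) ≤ 1 / (4 * N) :=
    one_div_le_one_div_of_le (by positivity) (le_mul_of_one_le_right (by positivity) (by linarith))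
  have hlin : t * (N * (α * β)) ≤ t * (-(β - α + 2) / 2) := mul_le_mul_of_nonneg_left hNαβ ht0.le
  calc N * -t * (((β - α) / 2) ^ 2 / (1 - -t) - ((α + β) / 2) ^ 2) + Real.log (1 - -t)
      = t * (N * (α * β)) + 1 / (4 * N * (1 + t)) + Real.log (1 + t) := by
        rw [sub_neg_eq_add, ht]; field_simp; ring
    _ ≤ t * (-(β - α + 2) / 2) + 1 / (4 * N) + t := by gcongr
    _ = -1 / (4 * N) := by rw [ht]; field_simp; ring

theorem stmt_18_general {n m : ℕ} (hn : 2 ≤ n) (A : Matrix (Fin n) (Fin m) ℝ) (u l d : Fin m → ℝ)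
    (r v : Fin m → ℝ)
    (hr : r = (u + l) / 2) (hv : v = (u - l) / 2)
    (hpd : (A * Matrix.diagonal d * Aᵀ).PosDef)
    (B : Matrix (Fin n) (Fin n) ℝ) (hB : B = (A * Matrix.diagonal d * Aᵀ)⁻¹)
    (ybar : Fin n → ℝ)
    (hybar : ybar = B *ᵥ (A *ᵥ (Matrix.diagonal d *ᵥ r)))
    (tbar : Fin m → ℝ) (htbar : tbar = Aᵀ *ᵥ ybar - r)
    (j : Fin m) (γj : ℝ)
    (hγj : γj = Real.sqrt ((fun k => A k j) ⬝ᵥ (B *ᵥ (fun k => A k j))))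
    (α β : ℝ) (hα : α = (tbar j - v j) / γj) (hβ : β = (tbar j + v j) / γj)
    (hαβ : α * β ≤ -2 / (n : ℝ)) (hmax : max α (-β) ≤ -2 / (n : ℝ)) :
    ∃ σ : ℝ, σ < 0 ∧
      gtilde A u l (d + (σ / ((1 - σ) * γj ^ 2)) • (Pi.single j 1 : Fin m → ℝ)) ≤
        gtilde A u l d - 1 / (4 * (n : ℝ)) := by
  subst hybar
  have hN : (0 : ℝ) < n := Nat.cast_pos.mpr (by omega)
  have hγ0 : γj ≠ 0 := by
    rintro rfl
    simp only [div_zero] at hα hβ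
    subst hα hβ
    linarith [div_pos two_pos hN, neg_div (n : ℝ) 2]
  have hγ : γj ^ 2 = A.col j ⬝ᵥ (B *ᵥ A.col j) :=
    hγj ▸ Real.sq_sqrt (Real.sqrt_ne_zero'.mp (hγj ▸ hγ0)).le
  obtain ⟨σ, hσ, hdecrease⟩ := exists_neg_sigma_decrease_le hN hαβ hmax
  have hv_j : v j / γj = (β - α) / 2 := by rw [hα, hβ]; field_simp; ring
  have htbar_j : tbar j / γj = (α + β) / 2 := by rw [hα, hβ]; field_simp; ring
  refine ⟨σ, hσ, ?_⟩
  rw [gtilde_dPlus_eq hr hv hpd.det_pos.ne'.isUnit hB htbar j hγ hγ0 (by linarith), hv_j, htbar_j]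
  linarith [neg_div (4 * (n : ℝ)) 1]

/-- first part of Theorem 5.3 of the paper. For `n ≥ 2`, if
`αβ ≤ -2/n` and `max{α, -β} ≤ -2/n`, then some negative `σ̂` decreases `g̃` by at
least `1/(4n)`. -/
theorem stmt_18 {n m : ℕ} (hn : 2 ≤ n) (A : Matrix (Fin n) (Fin m) ℝ) (u l d : Fin m → ℝ)
    (r v : Fin m → ℝ)
    (hd : 0 ≤ d)
    (hr : r = (u + l) / 2) (hv : v = (u - l) / 2)
    (hpd : (A * Matrix.diagonal d * Aᵀ).PosDef)
    (B : Matrix (Fin n) (Fin n) ℝ) (hB : B = (A * Matrix.diagonal d * Aᵀ)⁻¹)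
    (ybar : Fin n → ℝ)
    (hybar : ybar = B *ᵥ (A *ᵥ (Matrix.diagonal d *ᵥ r)))
    (hf : fval A u d l = 1)
    (tbar : Fin m → ℝ) (htbar : tbar = Aᵀ *ᵥ ybar - r)
    (j : Fin m) (γj : ℝ)
    (hγj : γj = Real.sqrt ((fun k => A k j) ⬝ᵥ (B *ᵥ (fun k => A k j))))
    (α β : ℝ) (hα : α = (tbar j - v j) / γj) (hβ : β = (tbar j + v j) / γj)
    (hαβ : α * β ≤ -2 / (n : ℝ)) (hmax : max α (-β) ≤ -2 / (n : ℝ)) :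
    ∃ σ : ℝ, σ < 0 ∧
      gtilde A u l (d + (σ / ((1 - σ) * γj ^ 2)) • (Pi.single j 1 : Fin m → ℝ)) ≤
        gtilde A u l d - 1 / (4 * (n : ℝ)) :=
  stmt_18_general hn A u l d r v hr hv hpd B hB ybar hybar tbar htbar j γj hγj α β hα hβ hαβ hmax
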